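/- Let E be a subspace of a geometry X. Then X/E := (X∖E)/∼, where x₁∼x₂ iff x₁∨E = x₂∨E, with subspaces defined as S/E for S a subspace of X containing E, is a geometry, and the quotient map π: X ⇢ X/E, x ↦ [x], is a partial morphism with exceptional subspace E. -/
import Mathlib


/-- A *geometry*: a closure space presented by its family of subspaces, satisfying
axioms G1 (∅, univ, singletons are subspaces), G2 (intersections of subspaces are
subspaces), G3 (MacLane–Steinitz exchange: no subspace strictly between `S` and `S ∨ x`)
and G4 (finitary). -/
structure GeometryOn (X : Type*) where
  IsSubspace : Set X → Prop
  empty_isSubspace : IsSubspace ∅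
  univ_isSubspace : IsSubspace Set.univ
  singleton_isSubspace : ∀ x : X, IsSubspace {x}
  sInter_isSubspace : ∀ 𝒮 : Set (Set X), (∀ S ∈ 𝒮, IsSubspace S) → IsSubspace (⋂₀ 𝒮)
  exchange : ∀ (S : Set X) (x : X), IsSubspace S → x ∉ S →
    ¬ ∃ S' : Set X, IsSubspace S' ∧ S ⊂ S' ∧ S' ⊂ ⋂₀ {T | IsSubspace T ∧ S ∪ {x} ⊆ T}
  finitary : ∀ (A : Set X) (x : X), x ∈ ⋂₀ {T | IsSubspace T ∧ A ⊆ T} →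
    ∃ F : Finset X, ↑F ⊆ A ∧ x ∈ ⋂₀ {T | IsSubspace T ∧ ↑F ⊆ T}

namespace GeometryOn

variable {X X' : Type*}

/-- The closure of `A`: the least subspace containing `A`. -/
def cl (G : GeometryOn X) (A : Set X) : Set X := ⋂₀ {T | G.IsSubspace T ∧ A ⊆ T}

/-- `A` is independent: no point of `A` lies in the closure of the remaining ones. -/
def Independent (G : GeometryOn X) (A : Set X) : Prop := ∀ a ∈ A, a ∉ G.cl (A \ {a})

/-- `B` is a basis of the subspace `S`: independent and generating `S`. -/
def IsBasisOf (G : GeometryOn X) (B S : Set X) : Prop :=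
  B ⊆ S ∧ G.Independent B ∧ G.cl B = S

/-- `S` has (finite) dimension `d ∈ ℤ`: it has a basis with `d + 1` elements. -/
def HasDimZ (G : GeometryOn X) (S : Set X) (d : ℤ) : Prop :=
  ∃ B : Finset X, G.IsBasisOf ↑B S ∧ (B.card : ℤ) = d + 1

/-- A morphism of geometries: preimages of subspaces are subspaces. -/
def IsMorphism (G : GeometryOn X) (G' : GeometryOn X') (φ : X → X') : Prop :=
  ∀ S' : Set X', G'.IsSubspace S' → G.IsSubspace (φ ⁻¹' S')

end GeometryOn

namespace GeometryOn

/-- The equivalence relation on `X ∖ E` defining the quotient `X/E`: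
`x₁ ∼ x₂ ↔ x₁ ∨ E = x₂ ∨ E`. -/
def QRel {X : Type*} (G : GeometryOn X) (E : Set X) (x₁ x₂ : {x : X // x ∉ E}) : Prop :=
  G.cl (E ∪ {x₁.1}) = G.cl (E ∪ {x₂.1})

/-- The distinguished family of subsets of `X/E`: the sets `S/E` for `S` a subspace of
`X` containing `E`. -/
def QSubspace {X : Type*} (G : GeometryOn X) (E : Set X)
    (T : Set (Quot (G.QRel E))) : Prop :=
  ∃ S : Set X, G.IsSubspace S ∧ E ⊆ S ∧
    T = Quot.mk (G.QRel E) '' {x : {x : X // x ∉ E} | x.1 ∈ S}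

/-- A partial morphism `X ⇢ X'` with exceptional subspace `E`: a morphism of geometries
from the subgeometry `X ∖ E` to `X'` which is constant on the classes `x ∨ E`. -/
def IsPartialMorphism {X X' : Type*} (G : GeometryOn X) (G' : GeometryOn X')
    (E : Set X) (φ : {x : X // x ∉ E} → X') : Prop :=
  (∀ S' : Set X', G'.IsSubspace S' →
    ∃ S : Set X, G.IsSubspace S ∧ φ ⁻¹' S' = Subtype.val ⁻¹' S) ∧
  (∀ x₁ x₂ : {x : X // x ∉ E}, G.cl (E ∪ {x₁.1}) = G.cl (E ∪ {x₂.1}) → φ x₁ = φ x₂)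

end GeometryOn

namespace GeometryOn

variable {X : Type*} (G : GeometryOn X)

lemma subset_cl (A : Set X) : A ⊆ G.cl A := fun _ hx T hT => hT.2 hx

lemma cl_isSubspace (A : Set X) : G.IsSubspace (G.cl A) :=
  G.sInter_isSubspace _ (fun _ hS => hS.1)

lemma cl_min {A T : Set X} (hT : G.IsSubspace T) (h : A ⊆ T) : G.cl A ⊆ T :=
  fun _ hx => hx T ⟨hT, h⟩

lemma cl_mono {A B : Set X} (h : A ⊆ B) : G.cl A ⊆ G.cl B :=
  G.cl_min (G.cl_isSubspace B) (h.trans (G.subset_cl B))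

lemma exchange_cl {S : Set X} {x y : X} (hS : G.IsSubspace S) (hx : x ∉ S)
    (hy : y ∈ G.cl (S ∪ {x})) (hyS : y ∉ S) :
    G.cl (S ∪ {y}) = G.cl (S ∪ {x}) := by
  have h1 : G.cl (S ∪ {y}) ⊆ G.cl (S ∪ {x}) :=
    G.cl_min (G.cl_isSubspace _)
      (Set.union_subset ((Set.subset_union_left).trans (G.subset_cl _)) (by simpa using hy))
  refine Set.Subset.antisymm h1 ?_
  by_contra hne
  have hne' : G.cl (S ∪ {y}) ≠ G.cl (S ∪ {x}) := by
    intro h; exact hne (h ▸ Set.Subset.rfl)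
  have hstrict1 : S ⊂ G.cl (S ∪ {y}) := by
    refine HasSubset.Subset.ssubset_of_ne
      ((Set.subset_union_left).trans (G.subset_cl _)) ?_
    intro h
    exact hyS (h ▸ (G.subset_cl _ (Set.mem_union_right _ rfl)))
  exact G.exchange S x hS hx ⟨G.cl (S ∪ {y}), G.cl_isSubspace _, hstrict1,
    HasSubset.Subset.ssubset_of_ne h1 hne'⟩

/-- The image in `X/E` of a set of points of `X`. -/
def qim (E S : Set X) : Set (Quot (G.QRel E)) :=
  Quot.mk (G.QRel E) '' {x : {x : X // x ∉ E} | x.1 ∈ S}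

/-- The invariant `x ↦ x ∨ E`, descended to the quotient. -/
def clfun (E : Set X) : Quot (G.QRel E) → Set X :=
  Quot.lift (fun x => G.cl (E ∪ {x.1})) (fun _ _ h => h)

lemma qrel_of_mk_eq {E : Set X} {a b : {x : X // x ∉ E}}
    (h : Quot.mk (G.QRel E) a = Quot.mk (G.QRel E) b) : G.QRel E a b :=
  congrArg (G.clfun E) h

lemma mem_qim {E S : Set X} (hS : G.IsSubspace S) (hES : E ⊆ S) (x : {x : X // x ∉ E}) :
    Quot.mk (G.QRel E) x ∈ G.qim E S ↔ x.1 ∈ S := by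
  constructor
  · rintro ⟨y, hy, hq⟩
    have h : G.cl (E ∪ {y.1}) = G.cl (E ∪ {x.1}) := G.qrel_of_mk_eq hq
    have hx : x.1 ∈ G.cl (E ∪ {y.1}) := h ▸ G.subset_cl _ (Set.mem_union_right _ rfl)
    exact G.cl_min hS (Set.union_subset hES (by simpa using hy)) hx
  · intro h; exact ⟨x, h, rfl⟩

lemma qim_subset_rev {E S₁ S₂ : Set X} (hS₂ : G.IsSubspace S₂) (hES₂ : E ⊆ S₂)
    (h : G.qim E S₁ ⊆ G.qim E S₂) : S₁ ⊆ S₂ := by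
  intro y hy
  by_cases hyE : y ∈ E
  · exact hES₂ hyE
  · exact (G.mem_qim hS₂ hES₂ ⟨y, hyE⟩).1 (h ⟨⟨y, hyE⟩, hy, rfl⟩)

/-- The full preimage in `X` of a set of points of `X/E`. -/
def pre (E : Set X) (A : Set (Quot (G.QRel E))) : Set X :=
  {y : X | ∃ h : y ∉ E, Quot.mk (G.QRel E) ⟨y, h⟩ ∈ A}

lemma qcl_eq {E : Set X} (A : Set (Quot (G.QRel E))) :
    ⋂₀ {T | G.QSubspace E T ∧ A ⊆ T} = G.qim E (G.cl (E ∪ G.pre E A)) := by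
  have hmem : G.qim E (G.cl (E ∪ G.pre E A)) ∈ {T | G.QSubspace E T ∧ A ⊆ T} := by
    constructor
    · exact ⟨_, G.cl_isSubspace _, (Set.subset_union_left).trans (G.subset_cl _), rfl⟩
    · intro a ha
      induction a using Quot.ind with
      | _ x => exact ⟨x, G.subset_cl _ (Set.mem_union_right _ ⟨x.2, ha⟩), rfl⟩
  have hlb : ∀ T ∈ {T | G.QSubspace E T ∧ A ⊆ T},
      G.qim E (G.cl (E ∪ G.pre E A)) ⊆ T := by
    rintro T ⟨⟨S, hSsub, hES, rfl⟩, hAT⟩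
    apply Set.image_mono
    intro y hy
    refine G.cl_min hSsub (Set.union_subset hES ?_) hy
    rintro z ⟨hz, hzA⟩
    exact (G.mem_qim hSsub hES ⟨z, hz⟩).1 (hAT hzA)
  exact Set.Subset.antisymm (Set.sInter_subset_of_mem hmem) (Set.subset_sInter hlb)

lemma pre_union_singleton {E S₀ : Set X} (hS₀ : G.IsSubspace S₀) (hES₀ : E ⊆ S₀)
    (x : {x : X // x ∉ E}) :
    G.cl (E ∪ G.pre E (G.qim E S₀ ∪ {Quot.mk (G.QRel E) x}))
      = G.cl (S₀ ∪ {x.1}) := by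
  apply Set.Subset.antisymm
  · refine G.cl_min (G.cl_isSubspace _) (Set.union_subset
      ((hES₀.trans Set.subset_union_left).trans (G.subset_cl _)) ?_)
    rintro y ⟨hy, hymem⟩
    rcases hymem with hT | hq
    · exact G.subset_cl _ (Set.mem_union_left _ ((G.mem_qim hS₀ hES₀ ⟨y, hy⟩).1 hT))
    · have h : G.cl (E ∪ {y}) = G.cl (E ∪ {x.1}) := G.qrel_of_mk_eq hq
      have : y ∈ G.cl (E ∪ {x.1}) := h ▸ G.subset_cl _ (Set.mem_union_right _ rfl)
      exact G.cl_mono (Set.union_subset_union_left _ hES₀) this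
  · refine G.cl_min (G.cl_isSubspace _) (Set.union_subset ?_ ?_)
    · intro y hy
      by_cases hyE : y ∈ E
      · exact G.subset_cl _ (Set.mem_union_left _ hyE)
      · exact G.subset_cl _ (Set.mem_union_right _
          ⟨hyE, Set.mem_union_left _ ⟨⟨y, hyE⟩, hy, rfl⟩⟩)
    · intro y hy
      rcases hy with rfl
      exact G.subset_cl _ (Set.mem_union_right _
        ⟨x.2, Set.mem_union_right _ rfl⟩)

end GeometryOn

open GeometryOn in
/-- for a subspace `E` of a geometry `X`, the quotient `X/E` (classes of
`X ∖ E` under `x₁ ∨ E = x₂ ∨ E`, with subspaces `S/E` for subspaces `E ⊆ S`) is a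
geometry, and the quotient map `π : X ⇢ X/E` is a partial morphism with exceptional
subspace `E`. -/
theorem quotient_is_geometry {X : Type*} (G : GeometryOn X) (E : Set X)
    (hE : G.IsSubspace E) :
    ∃ Q : GeometryOn (Quot (G.QRel E)),
      Q.IsSubspace = G.QSubspace E ∧
      G.IsPartialMorphism Q E (Quot.mk (G.QRel E)) := by
  refine ⟨{
    IsSubspace := G.QSubspace E
    empty_isSubspace := ⟨E, hE, Set.Subset.rfl, by
      have h : {x : {x : X // x ∉ E} | x.1 ∈ E} = ∅ :=
        Set.eq_empty_iff_forall_notMem.2 (fun y hy => y.2 hy)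
      rw [h, Set.image_empty]⟩
    univ_isSubspace := ⟨Set.univ, G.univ_isSubspace, Set.subset_univ _,
      (Set.eq_univ_of_forall (fun t => Quot.ind (fun x => ⟨x, trivial, rfl⟩) t)).symm⟩
    singleton_isSubspace := fun q => by
      induction q using Quot.ind with
      | _ x =>
        refine ⟨G.cl (E ∪ {x.1}), G.cl_isSubspace _,
          (Set.subset_union_left).trans (G.subset_cl _), ?_⟩
        apply Set.Subset.antisymm
        · rintro t rfl
          exact ⟨x, G.subset_cl _ (Set.mem_union_right _ rfl), rfl⟩
        · rintro t ⟨y, hy, rfl⟩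
          exact Quot.sound (G.exchange_cl hE x.2 hy y.2)
    sInter_isSubspace := fun 𝒮 h𝒮 => by
      refine ⟨⋂₀ {S | G.IsSubspace S ∧ E ⊆ S ∧
          Quot.mk (G.QRel E) '' {x : {x : X // x ∉ E} | x.1 ∈ S} ∈ 𝒮},
        G.sInter_isSubspace _ (fun S hS => hS.1),
        fun e he S hS => hS.2.1 he, ?_⟩
      apply Set.Subset.antisymm
      · intro t ht
        induction t using Quot.ind with
        | _ x =>
          refine ⟨x, ?_, rfl⟩
          intro S hS
          exact (G.mem_qim hS.1 hS.2.1 x).1 (ht _ hS.2.2)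
      · intro t ht T hT
        obtain ⟨S₀, h1, h2, rfl⟩ := h𝒮 T hT
        obtain ⟨y, hy, rfl⟩ := ht
        exact ⟨y, hy _ ⟨h1, h2, hT⟩, rfl⟩
    exchange := by
      intro T q hT hq
      rintro ⟨T', hT', hTT', hT'c⟩
      induction q using Quot.ind with
      | _ x =>
        obtain ⟨S₀, hS₀, hES₀, rfl⟩ := hT
        obtain ⟨S₁, hS₁, hES₁, rfl⟩ := hT'
        have hx : x.1 ∉ S₀ := fun h => hq ⟨x, h, rfl⟩
        have hkey : ⋂₀ {T | G.QSubspace E T ∧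
            Quot.mk (G.QRel E) '' {y : {x : X // x ∉ E} | y.1 ∈ S₀}
              ∪ {Quot.mk (G.QRel E) x} ⊆ T}
            = G.qim E (G.cl (S₀ ∪ {x.1})) := by
          rw [G.qcl_eq]
          exact congrArg (G.qim E) (G.pre_union_singleton hS₀ hES₀ x)
        rw [hkey] at hT'c
        have hcl_sub : G.IsSubspace (G.cl (S₀ ∪ {x.1})) := G.cl_isSubspace _
        have hEcl : E ⊆ G.cl (S₀ ∪ {x.1}) :=
          (hES₀.trans Set.subset_union_left).trans (G.subset_cl _)
        have h01 : S₀ ⊆ S₁ := G.qim_subset_rev hS₁ hES₁ hTT'.1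
        have h01' : S₀ ≠ S₁ := by
          rintro rfl
          exact hTT'.not_subset Set.Subset.rfl
        have h1c : S₁ ⊆ G.cl (S₀ ∪ {x.1}) := G.qim_subset_rev hcl_sub hEcl hT'c.1
        have h1c' : S₁ ≠ G.cl (S₀ ∪ {x.1}) := by
          rintro rfl
          exact hT'c.not_subset Set.Subset.rfl
        exact G.exchange S₀ x.1 hS₀ hx ⟨S₁, hS₁,
          HasSubset.Subset.ssubset_of_ne h01 h01',
          HasSubset.Subset.ssubset_of_ne h1c h1c'⟩
    finitary := by
      intro A t ht
      induction t using Quot.ind with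
      | _ x =>
        rw [G.qcl_eq] at ht
        have hcl_sub : G.IsSubspace (G.cl (E ∪ G.pre E A)) := G.cl_isSubspace _
        have hEcl : E ⊆ G.cl (E ∪ G.pre E A) :=
          (Set.subset_union_left).trans (G.subset_cl _)
        have hx : x.1 ∈ G.cl (E ∪ G.pre E A) := (G.mem_qim hcl_sub hEcl x).1 ht
        obtain ⟨F, hFsub, hxF⟩ := G.finitary (E ∪ G.pre E A) x.1 hx
        have hfin : (Quot.mk (G.QRel E) ''
            {y : {x : X // x ∉ E} | y.1 ∈ (F : Set X)}).Finite := by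
          apply Set.Finite.image
          exact Set.Finite.preimage (Subtype.val_injective.injOn) F.finite_toSet
        refine ⟨hfin.toFinset, ?_, ?_⟩
        · intro t ht'
          rw [Finset.mem_coe, Set.Finite.mem_toFinset] at ht'
          obtain ⟨y, hyF, rfl⟩ := ht'
          rcases hFsub hyF with hyE | hypre
          · exact absurd hyE y.2
          · exact hypre.2
        · rw [G.qcl_eq]
          refine (G.mem_qim (G.cl_isSubspace _)
            ((Set.subset_union_left).trans (G.subset_cl _)) x).2 ?_
          have hFsub' : (F : Set X) ⊆ E ∪ G.pre E (↑hfin.toFinset) := by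
            intro y hy
            by_cases hyE : y ∈ E
            · exact Set.mem_union_left _ hyE
            · refine Set.mem_union_right _ ⟨hyE, ?_⟩
              rw [Finset.mem_coe, Set.Finite.mem_toFinset]
              exact ⟨⟨y, hyE⟩, hy, rfl⟩
          exact G.cl_mono hFsub' hxF }, rfl, ?_, fun x₁ x₂ h => Quot.sound h⟩
  intro S' hS'
  obtain ⟨S, hS, hES, rfl⟩ := hS'
  exact ⟨S, hS, Set.ext (fun x => G.mem_qim hS hES x)⟩
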